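/- For every absolutely weakly null sequence (x_n) in a Banach lattice E, the set K = { Σ_{n} a_n x_n : Σ_n |a_n| ≤ 1 } is absolutely weakly sequentially compact, and in particular norm closed. -/

import Mathlib

set_option linter.unusedSectionVars false

open Filter Topology Pointwise MeasureTheory


section Defs

variable {E : Type*} [NormedAddCommGroup E] [Lattice E] [HasSolidNorm E] [IsOrderedAddMonoid E] [NormedSpace ℝ E]

/-- The pseudometric on a Banach lattice induced by a positive continuous linear functional `f`,
given by `dist x y = f |x - y|`. -/
noncomputable def absSeminormDist (f : E →L[ℝ] ℝ) (hf : ∀ x : E, 0 ≤ x → 0 ≤ f x) :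
    PseudoMetricSpace E where
  dist x y := f |x - y|
  dist_self x := by simp
  dist_comm x y := by simp [abs_sub_comm]
  dist_triangle x y z := by
    have h1 : |x - z| ≤ |x - y| + |y - z| := by
      calc |x - z| = |(x - y) + (y - z)| := by abel_nf
      _ ≤ |x - y| + |y - z| := abs_add_le _ _
    have h2 := hf (|x - y| + |y - z| - |x - z|) (sub_nonneg.mpr h1)
    simp only [map_sub, map_add] at h2
    show f |x - z| ≤ f |x - y| + f |y - z|
    linarith

/-- The absolute weak topology `|σ|(E, E*)` on a Banach lattice `E`: the topology generated by
the lattice seminorms `x ↦ |x*|(|x|) = x*(|x|)`, for `x*` ranging over the positive continuous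
linear functionals on `E`. -/
noncomputable def absWeakTopology (E : Type*) [NormedAddCommGroup E] [Lattice E] [HasSolidNorm E] [IsOrderedAddMonoid E] [NormedSpace ℝ E] :
    TopologicalSpace E :=
  ⨅ f : {f : E →L[ℝ] ℝ // ∀ x : E, 0 ≤ x → 0 ≤ f x},
    (absSeminormDist f.1 f.2).toUniformSpace.toTopologicalSpace

end Defs

/-!
The coefficient sequences of the `ℓ¹` unit ball form a compact set for pointwise convergence, so
the coefficients `aₖ` of a sequence `zₖ = ∑ aₖₙ xₙ` in `K` have a subsequence converging pointwise
to some `b` in the unit ball; put `z = ∑ bₙ xₙ`, which exists because `(xₙ)` is norm bounded.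
For a positive functional `f`, `f |zₖ - z| ≤ ∑ₙ |aₖₙ - bₙ| f |xₙ|`, and this tends to `0` since
`f |xₙ| → 0`, `∑ₙ |aₖₙ - bₙ| ≤ 2` and every term tends to `0`.

Every continuous functional `g` is dominated in modulus by the positive functional
`g⁺ + (-g)⁺` (Riesz–Kantorovich). Hence absolutely weakly null sequences are weakly bounded, so
norm bounded, and the absolute weak topology is Hausdorff. Sequentially compact for a coarser
Hausdorff topology, `K` is norm closed.
-/

lemma continuous_abs_of_continuousSup {α : Type*} [TopologicalSpace α] [Lattice α] [AddGroup α]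
    [ContinuousSup α] [ContinuousNeg α] : Continuous fun a : α ↦ |a| :=
  continuous_id.sup continuous_neg

lemma IsSeqCompact.isClosed_of_le {X : Type*} {t t' : TopologicalSpace X} (hle : t ≤ t')
    [@SequentialSpace X t] [@T2Space X t'] {s : Set X} (hs : @IsSeqCompact X t' s) :
    @IsClosed X t s := by
  refine @IsSeqClosed.isClosed X t _ s fun u p hu hup ↦ ?_
  obtain ⟨q, hq, φ, hφ, hconv⟩ := hs hu
  have hp : Tendsto (u ∘ φ) atTop (@nhds X t' p) :=
    (hup.comp hφ.tendsto_atTop).mono_right (nhds_mono hle)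
  exact tendsto_nhds_unique hp hconv ▸ hq

lemma bddAbove_range_norm_of_forall_dual {ι E : Type*} [NormedAddCommGroup E] [NormedSpace ℝ E]
    {x : ι → E} (h : ∀ g : StrongDual ℝ E, BddAbove (Set.range fun i ↦ |g (x i)|)) :
    BddAbove (Set.range fun i ↦ ‖x i‖) := by
  obtain ⟨C, hC⟩ := banach_steinhaus (g := fun i ↦ NormedSpace.inclusionInDoubleDual ℝ E (x i))
    fun g ↦ (h g).imp fun _ hC i ↦ hC ⟨i, rfl⟩
  exact ⟨C, Set.forall_mem_range.2 fun i ↦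
    (NormedSpace.inclusionInDoubleDualLi ℝ).norm_map (x i) ▸ hC i⟩

def l1UnitBall : Set (ℕ → ℝ) := {a | Summable (fun n ↦ |a n|) ∧ ∑' n, |a n| ≤ 1}

lemma l1UnitBall_eq_iInter : l1UnitBall = ⋂ s : Finset ℕ, {a | ∑ n ∈ s, |a n| ≤ 1} := by
  ext a
  simp only [l1UnitBall, Set.mem_ofPred_eq, Set.mem_iInter]
  refine ⟨fun ⟨hs, h⟩ s ↦ (hs.sum_le_tsum s fun n _ ↦ abs_nonneg _).trans h, fun h ↦ ?_⟩
  have hs := summable_of_sum_le (fun n ↦ abs_nonneg _) h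
  exact ⟨hs, hs.tsum_le_of_sum_le h⟩

lemma isCompact_l1UnitBall : IsCompact l1UnitBall := by
  refine (isCompact_univ_pi fun _ ↦ isCompact_Icc (a := (-1 : ℝ)) (b := 1)).of_isClosed_subset ?_ ?_
  · rw [l1UnitBall_eq_iInter]
    exact isClosed_iInter fun s ↦
      isClosed_le (continuous_finsetSum s fun n _ ↦ (continuous_apply n).abs) continuous_const
  · rintro a ⟨hs, h⟩ n -
    exact abs_le.1 ((hs.le_tsum n fun m _ ↦ abs_nonneg _).trans h)

lemma summable_abs_sub_of_mem_l1UnitBall {a b : ℕ → ℝ} (ha : a ∈ l1UnitBall) (hb : b ∈ l1UnitBall) :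
    Summable fun n ↦ |a n - b n| :=
  (ha.1.add hb.1).of_nonneg_of_le (fun _ ↦ abs_nonneg _) fun n ↦ abs_sub (a n) (b n)

lemma tsum_abs_sub_le_two_of_mem_l1UnitBall {a b : ℕ → ℝ} (ha : a ∈ l1UnitBall)
    (hb : b ∈ l1UnitBall) : ∑' n, |a n - b n| ≤ 2 :=
  calc ∑' n, |a n - b n| ≤ ∑' n, (|a n| + |b n|) :=
        (summable_abs_sub_of_mem_l1UnitBall ha hb).tsum_le_tsum (fun n ↦ abs_sub (a n) (b n))
          (ha.1.add hb.1)
    _ = ∑' n, |a n| + ∑' n, |b n| := ha.1.tsum_add hb.1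
    _ ≤ 2 := by linarith [ha.2, hb.2]

lemma tendsto_tsum_mul_of_tendsto_zero {u : ℕ → ℕ → ℝ} {t : ℕ → ℝ} {M : ℝ}
    (hu₀ : ∀ k n, 0 ≤ u k n) (hsum : ∀ k, Summable (u k)) (hM : ∀ k, ∑' n, u k n ≤ M)
    (hu : ∀ n, Tendsto (fun k ↦ u k n) atTop (𝓝 0)) (ht₀ : ∀ n, 0 ≤ t n)
    (ht : Tendsto t atTop (𝓝 0)) :
    Tendsto (fun k ↦ ∑' n, u k n * t n) atTop (𝓝 0) := by
  have hut₀ k n : 0 ≤ u k n * t n := mul_nonneg (hu₀ k n) (ht₀ n)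
  obtain ⟨C, hC⟩ := ht.bddAbove_range
  have hsum' k : Summable fun n ↦ u k n * t n :=
    ((hsum k).mul_right C).of_nonneg_of_le (hut₀ k) fun n ↦
      mul_le_mul_of_nonneg_left (hC ⟨n, rfl⟩) (hu₀ k n)
  refine tendsto_order.2 ⟨fun ε hε ↦ Eventually.of_forall fun k ↦
    hε.trans_le (tsum_nonneg (hut₀ k)), fun ε hε ↦ ?_⟩
  obtain ⟨δ, hδ, hMδ⟩ := exists_pos_mul_lt (half_pos hε) M
  obtain ⟨N, hN⟩ := eventually_atTop.1 (ht.eventually (gt_mem_nhds hδ))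
  have hhead : Tendsto (fun k ↦ ∑ n ∈ Finset.range N, u k n * t n) atTop (𝓝 0) := by
    simpa using tendsto_finsetSum (Finset.range N) fun n _ ↦ (hu n).mul_const (t n)
  filter_upwards [hhead.eventually (gt_mem_nhds (half_pos hε))] with k hk
  have htail : ∑' n, u k (n + N) * t (n + N) ≤ M * δ :=
    calc ∑' n, u k (n + N) * t (n + N) ≤ ∑' n, u k (n + N) * δ :=
          ((hsum' k).comp_injective (add_left_injective N)).tsum_le_tsum
            (fun n ↦ mul_le_mul_of_nonneg_left (hN _ (Nat.le_add_left N n)).le (hu₀ k _))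
            (((hsum k).comp_injective (add_left_injective N)).mul_right δ)
      _ = (∑' n, u k (n + N)) * δ := tsum_mul_right
      _ ≤ M * δ := mul_le_mul_of_nonneg_right
          ((tsum_comp_le_tsum_of_inj (hsum k) (hu₀ k) (add_left_injective N)).trans (hM k)) hδ.le
  rw [← (hsum' k).sum_add_tsum_nat_add N]
  linarith

section NormedLattice

variable {E : Type*} [NormedAddCommGroup E] [Lattice E] [HasSolidNorm E] [IsOrderedAddMonoid E]

lemma norm_le_norm_of_nonneg_of_le {x y : E} (hy : 0 ≤ y) (hyx : y ≤ x) : ‖y‖ ≤ ‖x‖ :=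
  norm_le_norm_of_abs_le_abs <| by rwa [abs_of_nonneg hy, abs_of_nonneg (hy.trans hyx)]

lemma norm_posPart_le (w : E) : ‖w⁺‖ ≤ ‖w‖ :=
  norm_le_norm_of_abs_le_abs <| by
    rw [abs_of_nonneg (posPart_nonneg w), ← posPart_add_negPart]
    exact le_add_of_nonneg_right (negPart_nonneg w)

lemma norm_negPart_le (w : E) : ‖w⁻‖ ≤ ‖w‖ := by
  simpa using norm_posPart_le (-w)

end NormedLattice

section RieszKantorovich

variable {E : Type*} [NormedAddCommGroup E] [Lattice E] [NormedSpace ℝ E]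

/-- The Riesz–Kantorovich formula `g⁺ x = sup {g y | 0 ≤ y ≤ x}`; it is `0` unless `0 ≤ x`. -/
noncomputable def rieszSup (g : E →L[ℝ] ℝ) (x : E) : ℝ := sSup (g '' Set.Icc 0 x)

variable {g : E →L[ℝ] ℝ} {x y : E}

lemma rieszSup_le {c : ℝ} (hx : 0 ≤ x) (h : ∀ y, 0 ≤ y → y ≤ x → g y ≤ c) : rieszSup g x ≤ c := by
  refine csSup_le ⟨0, 0, ⟨le_rfl, hx⟩, map_zero g⟩ ?_
  rintro _ ⟨y, ⟨hy, hyx⟩, rfl⟩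
  exact h y hy hyx

variable [HasSolidNorm E] [IsOrderedAddMonoid E]

lemma apply_le_norm_mul_norm_of_mem_Icc (hy : 0 ≤ y) (hyx : y ≤ x) : g y ≤ ‖g‖ * ‖x‖ :=
  (le_abs_self _).trans <| (g.le_opNorm y).trans <|
    mul_le_mul_of_nonneg_left (norm_le_norm_of_nonneg_of_le hy hyx) (norm_nonneg g)

lemma le_rieszSup (hy : 0 ≤ y) (hyx : y ≤ x) : g y ≤ rieszSup g x := by
  refine le_csSup ⟨‖g‖ * ‖x‖, ?_⟩ ⟨y, ⟨hy, hyx⟩, rfl⟩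
  rintro _ ⟨z, ⟨hz, hzx⟩, rfl⟩
  exact apply_le_norm_mul_norm_of_mem_Icc hz hzx

lemma rieszSup_nonneg (hx : 0 ≤ x) : 0 ≤ rieszSup g x := by
  simpa using le_rieszSup (g := g) le_rfl hx

lemma rieszSup_le_norm_mul_norm (hx : 0 ≤ x) : rieszSup g x ≤ ‖g‖ * ‖x‖ :=
  rieszSup_le hx fun _ ↦ apply_le_norm_mul_norm_of_mem_Icc

@[simp]
lemma rieszSup_zero : rieszSup g 0 = 0 :=
  le_antisymm (rieszSup_le le_rfl fun y hy hy' ↦ by simp [le_antisymm hy' hy])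
    (rieszSup_nonneg le_rfl)

lemma rieszSup_add (hx : 0 ≤ x) (hy : 0 ≤ y) :
    rieszSup g (x + y) = rieszSup g x + rieszSup g y := by
  refine le_antisymm (rieszSup_le (add_nonneg hx hy) fun z hz hzxy ↦ ?_) ?_
  · -- Riesz decomposition: `z = z ⊓ x + (z - z ⊓ x)` with `0 ≤ z - z ⊓ x ≤ y`.
    have hzy : z - z ⊓ x ≤ y := by
      rw [sub_inf, sub_self]
      exact sup_le (by simpa using hy) (sub_le_iff_le_add'.mpr hzxy)
    calc g z = g (z ⊓ x) + g (z - z ⊓ x) := by rw [← map_add, add_sub_cancel]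
      _ ≤ rieszSup g x + rieszSup g y :=
        add_le_add (le_rieszSup (le_inf hz hx) inf_le_right)
          (le_rieszSup (sub_nonneg.mpr inf_le_left) hzy)
  · rw [← le_sub_iff_add_le]
    refine rieszSup_le hx fun u hu hux ↦ le_sub_comm.mpr <| rieszSup_le hy fun v hv hvy ↦ ?_
    rw [le_sub_iff_add_le', ← map_add]
    exact le_rieszSup (add_nonneg hu hv) (add_le_add hux hvy)

lemma rieszSup_sub_rieszSup {p q : E} (hp : 0 ≤ p) (hq : 0 ≤ q) :
    rieszSup g p - rieszSup g q = rieszSup g (p - q)⁺ - rieszSup g (p - q)⁻ := by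
  have h : p + (p - q)⁻ = (p - q)⁺ + q :=
    (sub_eq_sub_iff_add_eq_add.mp (posPart_sub_negPart (p - q))).symm
  have := congrArg (rieszSup g) h
  rw [rieszSup_add hp (negPart_nonneg _), rieszSup_add (posPart_nonneg _) hq] at this
  linarith

variable (g) in
noncomputable def rieszPosPartHom : E →+ ℝ where
  toFun w := rieszSup g w⁺ - rieszSup g w⁻
  map_zero' := by simp
  map_add' u v := by
    have key := rieszSup_sub_rieszSup (g := g)
      (add_nonneg (posPart_nonneg u) (posPart_nonneg v))
      (add_nonneg (negPart_nonneg u) (negPart_nonneg v))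
    rw [add_sub_add_comm, posPart_sub_negPart, posPart_sub_negPart,
      rieszSup_add (posPart_nonneg u) (posPart_nonneg v),
      rieszSup_add (negPart_nonneg u) (negPart_nonneg v)] at key
    linarith

variable (g) in
noncomputable def rieszPosPart : E →L[ℝ] ℝ :=
  (rieszPosPartHom g).toRealLinearMap <| AddMonoidHomClass.continuous_of_bound _ ‖g‖ fun w ↦
    abs_sub_le_of_nonneg_of_le (rieszSup_nonneg (posPart_nonneg w))
      ((rieszSup_le_norm_mul_norm (posPart_nonneg w)).trans
        (mul_le_mul_of_nonneg_left (norm_posPart_le w) (norm_nonneg g)))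
      (rieszSup_nonneg (negPart_nonneg w))
      ((rieszSup_le_norm_mul_norm (negPart_nonneg w)).trans
        (mul_le_mul_of_nonneg_left (norm_negPart_le w) (norm_nonneg g)))

lemma rieszPosPart_apply_of_nonneg (hx : 0 ≤ x) : rieszPosPart g x = rieszSup g x := by
  simp [rieszPosPart, rieszPosPartHom, hx]

lemma rieszPosPart_nonneg (hx : 0 ≤ x) : 0 ≤ rieszPosPart g x :=
  rieszPosPart_apply_of_nonneg hx ▸ rieszSup_nonneg hx

lemma apply_le_rieszPosPart (hx : 0 ≤ x) : g x ≤ rieszPosPart g x :=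
  rieszPosPart_apply_of_nonneg hx ▸ le_rieszSup hx le_rfl

variable (g) in
lemma exists_nonneg_abs_apply_le :
    ∃ p : E →L[ℝ] ℝ, (∀ v, 0 ≤ v → 0 ≤ p v) ∧ ∀ w, |g w| ≤ p |w| := by
  refine ⟨rieszPosPart g + rieszPosPart (-g),
    fun v hv ↦ add_nonneg (rieszPosPart_nonneg hv) (rieszPosPart_nonneg hv), fun w ↦ ?_⟩
  have h₁ := apply_le_rieszPosPart (g := g) (posPart_nonneg w)
  have h₂ := apply_le_rieszPosPart (g := g) (negPart_nonneg w)
  have h₃ := apply_le_rieszPosPart (g := -g) (posPart_nonneg w)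
  have h₄ := apply_le_rieszPosPart (g := -g) (negPart_nonneg w)
  have h₅ := rieszPosPart_nonneg (g := g) (posPart_nonneg w)
  have h₆ := rieszPosPart_nonneg (g := g) (negPart_nonneg w)
  have h₇ := rieszPosPart_nonneg (g := -g) (posPart_nonneg w)
  have h₈ := rieszPosPart_nonneg (g := -g) (negPart_nonneg w)
  have hg : g w = g w⁺ - g w⁻ := by rw [← map_sub, posPart_sub_negPart]
  rw [neg_apply] at h₃ h₄
  rw [hg, ← posPart_add_negPart w, map_add, abs_le]
  simp only [add_apply]
  constructor <;> linarith

end RieszKantorovich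

section OrderedModule

variable {R E : Type*} [Ring R] [LinearOrder R] [IsOrderedRing R] [AddCommGroup E] [Lattice E]
  [Module R E] [PosSMulMono R E]

lemma smul_le_abs_smul_abs (c : R) (v : E) : c • v ≤ |c| • |v| := by
  rcases le_total 0 c with hc | hc
  · rw [abs_of_nonneg hc]
    exact smul_le_smul_of_nonneg_left (le_abs_self v) hc
  · rw [abs_of_nonpos hc, ← neg_smul_neg]
    exact smul_le_smul_of_nonneg_left (neg_le_abs v) (neg_nonneg.2 hc)

lemma abs_smul_le_abs_smul_abs [IsOrderedAddMonoid E] (c : R) (v : E) : |c • v| ≤ |c| • |v| :=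
  abs_le'.2 ⟨smul_le_abs_smul_abs c v, by simpa using smul_le_abs_smul_abs c (-v)⟩

end OrderedModule

section AbsWeakTopology

variable {E : Type*} [NormedAddCommGroup E] [Lattice E] [HasSolidNorm E] [IsOrderedAddMonoid E]
  [NormedSpace ℝ E]

lemma tendsto_absWeakTopology_iff {ι : Type*} {l : Filter ι} {u : ι → E} {y : E} :
    Tendsto u l (@nhds E (absWeakTopology E) y) ↔
      ∀ f : E →L[ℝ] ℝ, (∀ v, 0 ≤ v → 0 ≤ f v) → Tendsto (fun i ↦ f |u i - y|) l (𝓝 0) := by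
  rw [absWeakTopology, nhds_iInf, tendsto_iInf, Subtype.forall]
  refine forall₂_congr fun f hf ↦ ?_
  let _ := absSeminormDist f hf
  exact tendsto_iff_dist_tendsto_zero

lemma le_absWeakTopology : (inferInstance : TopologicalSpace E) ≤ absWeakTopology E := by
  refine le_of_nhds_le_nhds fun y ↦ tendsto_absWeakTopology_iff.2 fun f _ ↦ ?_
  have hf : Continuous fun v ↦ f |v| := f.continuous.comp continuous_abs_of_continuousSup
  simpa [Function.comp_def] using (hf.tendsto 0).comp (tendsto_sub_nhds_zero_iff.2 tendsto_id)

lemma eq_zero_of_forall_nonneg_apply_abs_eq_zero {w : E}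
    (h : ∀ f : E →L[ℝ] ℝ, (∀ v, 0 ≤ v → 0 ≤ f v) → f |w| = 0) : w = 0 := by
  refine SeparatingDual.eq_zero_of_forall_dual_eq_zero (R := ℝ) fun g ↦ ?_
  obtain ⟨p, hp, hgp⟩ := exists_nonneg_abs_apply_le g
  exact abs_nonpos_iff.1 (h p hp ▸ hgp w)

lemma t2Space_absWeakTopology : @T2Space E (absWeakTopology E) := by
  refine @T2Space.mk E (absWeakTopology E) fun y y' hne ↦ ?_
  obtain ⟨f, hf, hpos⟩ : ∃ f : E →L[ℝ] ℝ, ∃ hf : ∀ v, 0 ≤ v → 0 ≤ f v, 0 < f |y - y'| := by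
    by_contra! h
    exact hne <| sub_eq_zero.1 <| eq_zero_of_forall_nonneg_apply_abs_eq_zero fun f hf ↦
      le_antisymm (h f hf) (hf _ (abs_nonneg _))
  have hle : absWeakTopology E ≤ (absSeminormDist f hf).toUniformSpace.toTopologicalSpace :=
    iInf_le (fun f : {f : E →L[ℝ] ℝ // ∀ v, 0 ≤ v → 0 ≤ f v} ↦
      (absSeminormDist f.1 f.2).toUniformSpace.toTopologicalSpace) ⟨f, hf⟩
  -- from here on, `Metric.ball` refers to the pseudometric `f |· - ·|`
  let _ := absSeminormDist f hf
  have hopen (z : E) (r : ℝ) : IsOpen[absWeakTopology E] (Metric.ball z r) :=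
    hle _ Metric.isOpen_ball
  exact ⟨_, _, hopen y _, hopen y' _, Metric.mem_ball_self (half_pos hpos),
    Metric.mem_ball_self (half_pos hpos), Metric.ball_disjoint_ball (add_halves _).le⟩

lemma tendsto_absWeakTopology_zero_iff {ι : Type*} {l : Filter ι} {u : ι → E} :
    Tendsto u l (@nhds E (absWeakTopology E) 0) ↔
      ∀ f : E →L[ℝ] ℝ, (∀ v, 0 ≤ v → 0 ≤ f v) → Tendsto (fun i ↦ f |u i|) l (𝓝 0) := by
  simp [tendsto_absWeakTopology_iff]

lemma bddAbove_range_norm_of_tendsto_absWeakTopology {x : ℕ → E}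
    (hx : Tendsto x atTop (@nhds E (absWeakTopology E) 0)) :
    BddAbove (Set.range fun n ↦ ‖x n‖) := by
  refine bddAbove_range_norm_of_forall_dual fun g ↦ ?_
  obtain ⟨p, hp, hgp⟩ := exists_nonneg_abs_apply_le g
  obtain ⟨C, hC⟩ := (tendsto_absWeakTopology_zero_iff.1 hx p hp).bddAbove_range
  exact ⟨C, Set.forall_mem_range.2 fun n ↦ (hgp (x n)).trans (hC ⟨n, rfl⟩)⟩

lemma apply_abs_le_tsum_of_hasSum [PosSMulMono ℝ E] {f : E →L[ℝ] ℝ}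
    (hf : ∀ v, 0 ≤ v → 0 ≤ f v) {c : ℕ → ℝ} {x : ℕ → E} {w : E} (hw : HasSum (fun n ↦ c n • x n) w)
    (hsum : Summable fun n ↦ |c n| * f |x n|) :
    f |w| ≤ ∑' n, |c n| * f |x n| := by
  have hmono {u v : E} (h : u ≤ v) : f u ≤ f v := by simpa using hf _ (sub_nonneg.2 h)
  refine le_of_tendsto' (((f.continuous.comp continuous_abs_of_continuousSup).tendsto w).comp hw)
    fun s ↦ ?_
  calc f |∑ n ∈ s, c n • x n| ≤ f (∑ n ∈ s, |c n| • |x n|) := hmono <|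
        (Finset.le_sum_of_subadditive _ abs_zero.le abs_add_le s _).trans
          (Finset.sum_le_sum fun n _ ↦ abs_smul_le_abs_smul_abs (c n) (x n))
    _ = ∑ n ∈ s, |c n| * f |x n| := by simp
    _ ≤ ∑' n, |c n| * f |x n| :=
        hsum.sum_le_tsum s fun n _ ↦ mul_nonneg (abs_nonneg _) (hf _ (abs_nonneg _))

end AbsWeakTopology

def l1Combinations {E : Type*} [NormedAddCommGroup E] [NormedSpace ℝ E] (x : ℕ → E) : Set E :=
  {z | ∃ a : ℕ → ℝ, Summable (fun n => |a n|) ∧ (∑' n, |a n|) ≤ 1 ∧ HasSum (fun n => a n • x n) z}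

section Compactness

variable {E : Type*} [NormedAddCommGroup E] [Lattice E] [HasSolidNorm E] [IsOrderedAddMonoid E]
  [NormedSpace ℝ E] [PosSMulMono ℝ E] {x : ℕ → E}

lemma tendsto_absWeakTopology_of_tendsto_pi
    (hx : Tendsto x atTop (@nhds E (absWeakTopology E) 0)) {a : ℕ → ℕ → ℝ} {b : ℕ → ℝ}
    (ha : ∀ k, a k ∈ l1UnitBall) (hb : b ∈ l1UnitBall) (hab : Tendsto a atTop (𝓝 b))
    {z : ℕ → E} {w : E} (hz : ∀ k, HasSum (fun n ↦ a k n • x n) (z k))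
    (hw : HasSum (fun n ↦ b n • x n) w) :
    Tendsto z atTop (@nhds E (absWeakTopology E) w) := by
  refine tendsto_absWeakTopology_iff.2 fun f hf ↦ ?_
  have hfx := tendsto_absWeakTopology_zero_iff.1 hx f hf
  have hsum k := summable_abs_sub_of_mem_l1UnitBall (ha k) hb
  have hcoeff n : Tendsto (fun k ↦ |a k n - b n|) atTop (𝓝 0) := by
    simpa using ((tendsto_pi_nhds.1 hab n).sub_const (b n)).abs
  refine squeeze_zero (fun k ↦ hf _ (abs_nonneg _)) (fun k ↦ ?_)
    (tendsto_tsum_mul_of_tendsto_zero (fun k n ↦ abs_nonneg _) hsum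
      (fun k ↦ tsum_abs_sub_le_two_of_mem_l1UnitBall (ha k) hb) hcoeff
      (fun n ↦ hf _ (abs_nonneg _)) hfx)
  obtain ⟨C, hC⟩ := hfx.bddAbove_range
  refine apply_abs_le_tsum_of_hasSum hf (by simpa [sub_smul] using (hz k).sub hw)
    (((hsum k).mul_right C).of_nonneg_of_le
      (fun n ↦ mul_nonneg (abs_nonneg _) (hf _ (abs_nonneg _))) fun n ↦ mul_le_mul_of_nonneg_left (hC ⟨n, rfl⟩) (abs_nonneg _))

theorem isSeqCompact_l1Combinations [CompleteSpace E]
    (hx : Tendsto x atTop (@nhds E (absWeakTopology E) 0)) :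
    @IsSeqCompact E (absWeakTopology E) (l1Combinations x) := by
  intro z hz
  choose a ha₁ ha₂ hz using hz
  obtain ⟨b, hb, φ, hφ, hab⟩ :=
    isCompact_l1UnitBall.isSeqCompact fun k ↦ (⟨ha₁ k, ha₂ k⟩ : a k ∈ l1UnitBall)
  obtain ⟨C, hC⟩ := bddAbove_range_norm_of_tendsto_absWeakTopology hx
  have hw : Summable fun n ↦ b n • x n :=
    Summable.of_norm_bounded (hb.1.mul_right C) fun n ↦ by
      rw [norm_smul, Real.norm_eq_abs]
      exact mul_le_mul_of_nonneg_left (hC ⟨n, rfl⟩) (abs_nonneg _)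
  exact ⟨_, ⟨b, hb.1, hb.2, hw.hasSum⟩, φ, hφ, tendsto_absWeakTopology_of_tendsto_pi hx
    (fun k ↦ ⟨ha₁ (φ k), ha₂ (φ k)⟩) hb hab (fun k ↦ hz (φ k)) hw.hasSum⟩

end Compactness

theorem absWeakNull_series_set_seqCompact_general {E : Type*} [NormedAddCommGroup E] [Lattice E] [HasSolidNorm E] [IsOrderedAddMonoid E] [NormedSpace ℝ E] [PosSMulStrictMono ℝ E] [CompleteSpace E] (x : ℕ → E)
    (hx : Tendsto x atTop (@nhds E (absWeakTopology E) 0)) :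
    @IsSeqCompact E (absWeakTopology E)
        {z : E | ∃ a : ℕ → ℝ, Summable (fun n => |a n|) ∧ (∑' n, |a n|) ≤ 1 ∧
          HasSum (fun n => a n • x n) z} ∧
      IsClosed {z : E | ∃ a : ℕ → ℝ, Summable (fun n => |a n|) ∧ (∑' n, |a n|) ≤ 1 ∧
          HasSum (fun n => a n • x n) z} := by
  have hK := isSeqCompact_l1Combinations hx
  have := t2Space_absWeakTopology (E := E)
  exact ⟨hK, hK.isClosed_of_le le_absWeakTopology⟩

/-- For an absolutely weakly null sequence `(x_n)` in a Banach lattice, the set of sums of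
series `∑ a_n x_n` with `∑ |a_n| ≤ 1` is absolutely weakly sequentially compact, and in
particular norm closed. -/
theorem absWeakNull_series_set_seqCompact {E : Type*} [NormedAddCommGroup E] [Lattice E] [HasSolidNorm E] [IsOrderedAddMonoid E] [NormedSpace ℝ E] [PosSMulStrictMono ℝ E] [PosSMulReflectLT ℝ E] [CompleteSpace E] (x : ℕ → E)
    (hx : Tendsto x atTop (@nhds E (absWeakTopology E) 0)) :
    @IsSeqCompact E (absWeakTopology E)
        {z : E | ∃ a : ℕ → ℝ, Summable (fun n => |a n|) ∧ (∑' n, |a n|) ≤ 1 ∧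
          HasSum (fun n => a n • x n) z} ∧
      IsClosed {z : E | ∃ a : ℕ → ℝ, Summable (fun n => |a n|) ∧ (∑' n, |a n|) ≤ 1 ∧
          HasSum (fun n => a n • x n) z} :=
  absWeakNull_series_set_seqCompact_general x hx
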